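/- arXiv:2311.18346 — 4 statements merged into one kernel-verified Lean document; each statement's English description precedes it below -/
import Mathlib

section
/- For a finite state space X, finite action space A, horizon N, transition kernels p_n : X × A → Δ(X), and initial distribution μ₀ ∈ Δ(X×A), the map sending a policy sequence π = (π_n)_{n∈[N]}, π_n : X → Δ(A), to its induced state-action distribution sequence μ^π (defined by μ^π_0 = μ₀ and μ^π_n(x',a') = Σ_{x,a} μ^π_{n-1}(x,a) p_n(x'|x,a) π_n(a'|x'), where for states x with marginal zero the policy is fixed to be uniform) is a bijection onto the set M_{μ₀} of distribution sequences satisfying the Bellman-flow constraints Σ_{a'} μ_n(x',a') = Σ_{x,a} p_n(x'|x,a) μ_{n-1}(x,a). -/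
open Finset

noncomputable section

variable {X A : Type*} [Fintype X] [Fintype A]

/-- A probability distribution on a finite type, as a nonnegative function summing to 1. -/
def IsDist {Y : Type*} [Fintype Y] (η : Y → ℝ) : Prop :=
  (∀ y, 0 ≤ η y) ∧ ∑ y, η y = 1

/-- The state-action distribution sequence induced by a policy sequence `π` in the MDP with
transition kernels `p` and initial state-action distribution `μ0`.  Index `i : Fin N` of `p`
and `π` corresponds to the paper's step `i+1`, and `occF … n` is the paper's `μ_n`. -/
def occF (N : ℕ) (μ0 : X × A → ℝ) (p : Fin N → X → A → X → ℝ)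
    (π : Fin N → X → A → ℝ) : ℕ → X × A → ℝ
  | 0 => μ0
  | n + 1 => fun y =>
      if h : n < N then
        (∑ x, ∑ a, occF N μ0 p π n (x, a) * p ⟨n, h⟩ x a y.1) * π ⟨n, h⟩ y.1 y.2
      else 0

lemma occF_succ_apply (N : ℕ) (μ0 : X × A → ℝ) (p : Fin N → X → A → X → ℝ)
    (π : Fin N → X → A → ℝ) (k : ℕ) (h : k < N) (x : X) (a : A) :
    occF N μ0 p π (k + 1) (x, a) =
      (∑ x₀, ∑ a₀, occF N μ0 p π k (x₀, a₀) * p ⟨k, h⟩ x₀ a₀ x) * π ⟨k, h⟩ x a := by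
  simp only [occF, dif_pos h]

lemma occF_nonneg (N : ℕ) (μ0 : X × A → ℝ) (hμ0 : ∀ y, 0 ≤ μ0 y)
    (p : Fin N → X → A → X → ℝ) (hp : ∀ n x a x', 0 ≤ p n x a x')
    (π : Fin N → X → A → ℝ) (hπ : ∀ n x a, 0 ≤ π n x a) :
    ∀ k y, 0 ≤ occF N μ0 p π k y := by
  intro k
  induction k with
  | zero => exact hμ0
  | succ n ih =>
    intro y
    simp only [occF]
    split
    · exact mul_nonneg (Finset.sum_nonneg fun x _ => Finset.sum_nonneg fun a _ =>
        mul_nonneg (ih _) (hp _ _ _ _)) (hπ _ _ _)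
    · exact le_refl 0

lemma occF_flow (N : ℕ) (μ0 : X × A → ℝ) (p : Fin N → X → A → X → ℝ)
    (π : Fin N → X → A → ℝ) (hπ : ∀ n x, ∑ a, π n x a = 1)
    (k : ℕ) (h : k < N) (x' : X) :
    ∑ a', occF N μ0 p π (k + 1) (x', a') =
      ∑ x, ∑ a, occF N μ0 p π k (x, a) * p ⟨k, h⟩ x a x' := by
  have : ∀ a', occF N μ0 p π (k + 1) (x', a') =
      (∑ x, ∑ a, occF N μ0 p π k (x, a) * p ⟨k, h⟩ x a x') * π ⟨k, h⟩ x' a' :=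
    fun a' => occF_succ_apply N μ0 p π k h x' a'
  rw [Finset.sum_congr rfl fun a' _ => this a', ← Finset.mul_sum, hπ, mul_one]

lemma occF_sum (N : ℕ) (μ0 : X × A → ℝ) (hμ0 : ∑ y, μ0 y = 1)
    (p : Fin N → X → A → X → ℝ) (hp : ∀ n x a, ∑ x', p n x a x' = 1)
    (π : Fin N → X → A → ℝ) (hπ : ∀ n x, ∑ a, π n x a = 1) :
    ∀ k, k ≤ N → ∑ y, occF N μ0 p π k y = 1 := by
  intro k
  induction k with
  | zero => intro _; simpa [occF] using hμ0
  | succ n ih =>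
    intro hk
    have h : n < N := hk
    rw [Fintype.sum_prod_type]
    calc ∑ x', ∑ a', occF N μ0 p π (n + 1) (x', a')
        = ∑ x', ∑ x, ∑ a, occF N μ0 p π n (x, a) * p ⟨n, h⟩ x a x' :=
          Finset.sum_congr rfl fun x' _ => occF_flow N μ0 p π hπ n h x'
      _ = ∑ x, ∑ a, ∑ x', occF N μ0 p π n (x, a) * p ⟨n, h⟩ x a x' := by
          rw [Finset.sum_comm]
          exact Finset.sum_congr rfl fun x _ => Finset.sum_comm
      _ = ∑ x, ∑ a, occF N μ0 p π n (x, a) := by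
          refine Finset.sum_congr rfl fun x _ => Finset.sum_congr rfl fun a _ => ?_
          rw [← Finset.mul_sum, hp, mul_one]
      _ = 1 := by rw [← Fintype.sum_prod_type]; exact ih (le_of_lt h)

/-- The map sending a (normalized) policy sequence to its induced state-action distribution
sequence is a bijection onto the Bellman-flow polytope `M_{μ0}`. -/
theorem policy_occupancy_bijOn [Nonempty X] [Nonempty A] (N : ℕ) (hN : 1 ≤ N)
    (μ0 : X × A → ℝ) (hμ0 : IsDist μ0)
    (p : Fin N → X → A → X → ℝ) (hp : ∀ n x a, IsDist (p n x a)) :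
    Set.BijOn
      (fun π : Fin N → X → A → ℝ => fun n : Fin N => occF N μ0 p π (n.1 + 1))
      -- policies: each `π n x` is a distribution over actions, normalized to be uniform
      -- at states with zero marginal
      {π : Fin N → X → A → ℝ | (∀ n x, IsDist (π n x)) ∧
        ∀ n : Fin N, ∀ x : X, (∑ a, occF N μ0 p π (n.1 + 1) (x, a)) = 0 →
          ∀ a, π n x a = 1 / (Fintype.card A : ℝ)}
      -- the set `M_{μ0}` of sequences of distributions satisfying the Bellman-flow constraints
      {μ : Fin N → X × A → ℝ | (∀ n, IsDist (μ n)) ∧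
        ∀ n : Fin N, ∀ x' : X,
          (∑ a', μ n (x', a')) =
            ∑ x, ∑ a, p n x a x' *
              (if hn : n.1 = 0 then μ0 (x, a)
               else μ ⟨n.1 - 1, by have := n.2; omega⟩ (x, a))} := by
  classical
  obtain ⟨hμ0n, hμ0s⟩ := hμ0
  have hpn : ∀ n x a x', 0 ≤ p n x a x' := fun n x a => (hp n x a).1
  have hps : ∀ n x a, ∑ x', p n x a x' = 1 := fun n x a => (hp n x a).2
  refine ⟨?_, ?_, ?_⟩
  · -- MapsTo
    rintro π ⟨hπd, hπu⟩
    have hπn : ∀ n x a, 0 ≤ π n x a := fun n x => (hπd n x).1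
    have hπs : ∀ n x, ∑ a, π n x a = 1 := fun n x => (hπd n x).2
    refine ⟨fun n => ⟨fun y => occF_nonneg N μ0 hμ0n p hpn π hπn _ y,
      occF_sum N μ0 hμ0s p hps π hπs (n.1 + 1) n.2⟩, fun n x' => ?_⟩
    rw [occF_flow N μ0 p π hπs n.1 n.2 x']
    refine Finset.sum_congr rfl fun x _ => Finset.sum_congr rfl fun a _ => ?_
    rw [mul_comm, Fin.eta]
    congr 1
    by_cases hn : n.1 = 0
    · rw [dif_pos hn, hn]
      rfl
    · rw [dif_neg hn]
      simp only
      congr 1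
      omega
  · -- InjOn
    rintro π ⟨hπd, hπu⟩ π' ⟨hπ'd, hπ'u⟩ heq
    have hπs : ∀ n x, ∑ a, π n x a = 1 := fun n x => (hπd n x).2
    have hocc : ∀ k, k ≤ N → occF N μ0 p π k = occF N μ0 p π' k := by
      intro k hk
      match k, hk with
      | 0, _ => rfl
      | (m + 1), hk => exact congrFun heq ⟨m, hk⟩
    funext n x a
    have hS : (∑ x₀, ∑ a₀, occF N μ0 p π' n.1 (x₀, a₀) * p ⟨n.1, n.2⟩ x₀ a₀ x)
        = ∑ x₀, ∑ a₀, occF N μ0 p π n.1 (x₀, a₀) * p ⟨n.1, n.2⟩ x₀ a₀ x := by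
      rw [hocc n.1 (le_of_lt n.2)]
    by_cases hz : (∑ x₀, ∑ a₀, occF N μ0 p π n.1 (x₀, a₀) * p ⟨n.1, n.2⟩ x₀ a₀ x) = 0
    · have h1 : (∑ a', occF N μ0 p π (n.1 + 1) (x, a')) = 0 := by
        rw [occF_flow N μ0 p π hπs n.1 n.2 x]; exact hz
      have h2 : (∑ a', occF N μ0 p π' (n.1 + 1) (x, a')) = 0 := by
        rw [← hocc (n.1 + 1) n.2]; exact h1
      rw [hπu n x h1 a, hπ'u n x h2 a]
    · have h1 := occF_succ_apply N μ0 p π n.1 n.2 x a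
      have h2 := occF_succ_apply N μ0 p π' n.1 n.2 x a
      rw [hS] at h2
      have h3 : occF N μ0 p π (n.1 + 1) (x, a) = occF N μ0 p π' (n.1 + 1) (x, a) := by
        rw [hocc (n.1 + 1) n.2]
      rw [h1, h2] at h3
      have := mul_left_cancel₀ hz h3
      simpa [Fin.eta] using this
  · -- SurjOn
    rintro μ ⟨hμd, hμflow⟩
    have hμn : ∀ n y, 0 ≤ μ n y := fun n => (hμd n).1
    set ρ : Fin N → X → ℝ := fun n x => ∑ a, μ n (x, a) with hρdef
    set π : Fin N → X → A → ℝ := fun n x a =>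
      if ρ n x = 0 then 1 / (Fintype.card A : ℝ) else μ n (x, a) / ρ n x with hπdef
    have hρn : ∀ n x, 0 ≤ ρ n x := fun n x => Finset.sum_nonneg fun a _ => hμn n (x, a)
    have hμz : ∀ n x, ρ n x = 0 → ∀ a, μ n (x, a) = 0 := by
      intro n x h a
      have := (Finset.sum_eq_zero_iff_of_nonneg
        (fun a _ => hμn n (x, a))).1 h a (Finset.mem_univ a)
      exact this
    have hπd : ∀ n x, IsDist (π n x) := by
      intro n x
      constructor
      · intro a
        simp only [hπdef]
        split
        · positivity
        · exact div_nonneg (hμn n (x, a)) (hρn n x)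
      · simp only [hπdef]
        by_cases h : ρ n x = 0
        · simp only [if_pos h, Finset.sum_const, Finset.card_univ, nsmul_eq_mul,
            mul_one_div]
          rw [div_self (Nat.cast_ne_zero.2 Fintype.card_ne_zero)]
        · simp only [if_neg h]
          rw [← Finset.sum_div, div_self h]
    have hπn : ∀ n x a, 0 ≤ π n x a := fun n x => (hπd n x).1
    have hπs : ∀ n x, ∑ a, π n x a = 1 := fun n x => (hπd n x).2
    -- key : occF of π reproduces μ
    have key : ∀ k (h : k < N), occF N μ0 p π (k + 1) = μ ⟨k, h⟩ := by
      intro k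
      induction k with
      | zero =>
        intro h
        funext y
        obtain ⟨x, a⟩ := y
        have hSρ : (∑ x₀, ∑ a₀, occF N μ0 p π 0 (x₀, a₀) * p ⟨0, h⟩ x₀ a₀ x)
            = ρ ⟨0, h⟩ x := by
          have := hμflow ⟨0, h⟩ x
          simp only [dif_pos rfl] at this
          rw [hρdef]
          simp only
          rw [this]
          exact Finset.sum_congr rfl fun x₀ _ => Finset.sum_congr rfl fun a₀ _ =>
            mul_comm _ _
        rw [occF_succ_apply N μ0 p π 0 h x a, hSρ]
        by_cases hz : ρ ⟨0, h⟩ x = 0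
        · rw [hz, zero_mul, hμz ⟨0, h⟩ x hz a]
        · simp only [hπdef, if_neg hz]
          rw [mul_comm, div_mul_cancel₀ _ hz]
      | succ m ih =>
        intro h
        have hm : m < N := Nat.lt_of_succ_lt h
        funext y
        obtain ⟨x, a⟩ := y
        have hSρ : (∑ x₀, ∑ a₀, occF N μ0 p π (m + 1) (x₀, a₀) * p ⟨m + 1, h⟩ x₀ a₀ x)
            = ρ ⟨m + 1, h⟩ x := by
          have hfl := hμflow ⟨m + 1, h⟩ x
          simp only [dif_neg (Nat.succ_ne_zero m)] at hfl
          rw [hρdef]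
          simp only
          rw [hfl]
          refine Finset.sum_congr rfl fun x₀ _ => Finset.sum_congr rfl fun a₀ _ => ?_
          rw [ih hm]
          exact mul_comm _ _
        rw [occF_succ_apply N μ0 p π (m + 1) h x a, hSρ]
        by_cases hz : ρ ⟨m + 1, h⟩ x = 0
        · rw [hz, zero_mul, hμz ⟨m + 1, h⟩ x hz a]
        · simp only [hπdef, if_neg hz]
          rw [mul_comm, div_mul_cancel₀ _ hz]
    refine ⟨π, ⟨hπd, ?_⟩, ?_⟩
    · intro n x hsum a
      have hkey : occF N μ0 p π (n.1 + 1) = μ n := by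
        have := key n.1 n.2
        simpa [Fin.eta] using this
      rw [hkey] at hsum
      simp only [hπdef]
      rw [if_pos hsum]
    · funext n
      have := key n.1 n.2
      simpa [Fin.eta] using this
end
end

section
/- For μ, μ' in the interior of (Δ(X×A))^N (all entries positive), with ψ defined by ψ(μ) := Σ_n φ(μ_n) − Σ_n φ(ρ_n), the associated Bregman divergence satisfies ψ(μ) − ψ(μ') − ⟨∇ψ(μ'), μ−μ'⟩ = Σ_{n=1}^N Σ_{x,a} μ_n(x,a) log( (μ_n(x,a)/ρ_n(x)) / (μ'_n(x,a)/ρ'_n(x)) ), i.e. the Bregman divergence induced by ψ equals Γ(μ,μ'), the sum of expected log-ratios of conditional (policy) distributions. -/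
open Finset

noncomputable section

variable {X A : Type*} [Fintype X] [Fintype A]

lemma helper {A : Type*} [Fintype A] (f g : A → ℝ) (hf : ∀ a, 0 < f a) (hg : ∀ a, 0 < g a) :
    (∑ a, f a * Real.log (f a)) - (∑ a, g a * Real.log (g a))
      - ((∑ a, f a) * Real.log (∑ a, f a) - (∑ a, g a) * Real.log (∑ a, g a))
      - ∑ a, Real.log (g a / (∑ b, g b)) * (f a - g a)
    = ∑ a, f a * Real.log ((f a / (∑ b, f b)) / (g a / (∑ b, g b))) := by
  rcases isEmpty_or_nonempty A with h | h
  · simp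
  have hr : 0 < ∑ b, f b := Finset.sum_pos (fun a _ => hf a) univ_nonempty
  have hr' : 0 < ∑ b, g b := Finset.sum_pos (fun a _ => hg a) univ_nonempty
  have e1 : ∀ a : A, Real.log ((f a / (∑ b, f b)) / (g a / (∑ b, g b)))
      = Real.log (f a) - Real.log (∑ b, f b) - (Real.log (g a) - Real.log (∑ b, g b)) := by
    intro a
    rw [Real.log_div (div_pos (hf a) hr).ne' (div_pos (hg a) hr').ne',
      Real.log_div (hf a).ne' hr.ne', Real.log_div (hg a).ne' hr'.ne']
  have e2 : ∀ a : A, Real.log (g a / (∑ b, g b)) = Real.log (g a) - Real.log (∑ b, g b) := by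
    intro a; rw [Real.log_div (hg a).ne' hr'.ne']
  simp only [e1, e2, mul_sub, sub_mul, Finset.sum_sub_distrib,
    mul_comm (Real.log _), ← Finset.sum_mul]
  ring

/-- The Bregman divergence induced by `ψ(μ) = Σ_n φ(μ_n) − Σ_n φ(ρ_n)` equals `Γ(μ, μ')`,
the sum of expected log-ratios of the conditional (policy) distributions.  The gradient of `ψ`
has coordinates `∂ψ/∂μ_n(x,a) = log(μ_n(x,a)/ρ_n(x))`. -/
theorem bregman_of_psi_eq_gamma (N : ℕ) (hN : 1 ≤ N)
    (μ μ' : ℕ → X × A → ℝ)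
    (hμ : ∀ n, IsDist (μ n)) (hμ' : ∀ n, IsDist (μ' n))
    (hμpos : ∀ n (y : X × A), 0 < μ n y) (hμ'pos : ∀ n (y : X × A), 0 < μ' n y) :
    let ρ : ℕ → X → ℝ := fun n x => ∑ a, μ n (x, a)
    let ρ' : ℕ → X → ℝ := fun n x => ∑ a, μ' n (x, a)
    let ψ : (ℕ → X × A → ℝ) → ℝ := fun ν =>
      (∑ n ∈ Icc 1 N, ∑ y : X × A, ν n y * Real.log (ν n y)) -
        ∑ n ∈ Icc 1 N, ∑ x, (∑ a, ν n (x, a)) * Real.log (∑ a, ν n (x, a))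
    ψ μ - ψ μ' -
        (∑ n ∈ Icc 1 N, ∑ x, ∑ a,
          Real.log (μ' n (x, a) / ρ' n x) * (μ n (x, a) - μ' n (x, a))) =
      ∑ n ∈ Icc 1 N, ∑ x, ∑ a,
        μ n (x, a) * Real.log ((μ n (x, a) / ρ n x) / (μ' n (x, a) / ρ' n x)) := by
  intro ρ ρ' ψ
  simp only [ψ, ρ, ρ', Fintype.sum_prod_type, ← Finset.sum_sub_distrib]
  refine Finset.sum_congr rfl fun n _ => ?_
  refine Finset.sum_congr rfl fun x _ => ?_
  have h := helper (fun a => μ n (x, a)) (fun a => μ' n (x, a))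
    (fun a => hμpos n (x, a)) (fun a => hμ'pos n (x, a))
  simp only at h ⊢
  linarith
end
end

section
/- For μ, μ' in the interior of (Δ(X×A))^N with ψ(μ) := Σ_n φ(μ_n) − Σ_n φ(ρ_n), one has ⟨∇ψ(μ) − ∇ψ(μ'), μ − μ'⟩ = Γ(μ,μ') + Γ(μ',μ), where Γ(μ,μ') := Σ_n Σ_{x,a} μ_n(x,a) log( (μ_n(x,a)/ρ_n(x)) / (μ'_n(x,a)/ρ'_n(x)) ). -/
open Finset

noncomputable section

variable {X A : Type*} [Fintype X] [Fintype A]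

/-- `⟨∇ψ(μ) − ∇ψ(μ'), μ − μ'⟩ = Γ(μ,μ') + Γ(μ',μ)`, where `∇ψ` has coordinates
`log(μ_n(x,a)/ρ_n(x))` and `Γ` is the sum of expected log-ratios of conditional policies. -/
theorem grad_psi_inner_eq_gamma_add_gamma (N : ℕ) (hN : 1 ≤ N)
    (μ μ' : ℕ → X × A → ℝ)
    (hμ : ∀ n, IsDist (μ n)) (hμ' : ∀ n, IsDist (μ' n))
    (hμpos : ∀ n (y : X × A), 0 < μ n y) (hμ'pos : ∀ n (y : X × A), 0 < μ' n y) :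
    let ρ : ℕ → X → ℝ := fun n x => ∑ a, μ n (x, a)
    let ρ' : ℕ → X → ℝ := fun n x => ∑ a, μ' n (x, a)
    let Γ : (ℕ → X × A → ℝ) → (ℕ → X → ℝ) → (ℕ → X × A → ℝ) → (ℕ → X → ℝ) → ℝ :=
      fun ν σ ν' σ' =>
        ∑ n ∈ Icc 1 N, ∑ x, ∑ a,
          ν n (x, a) * Real.log ((ν n (x, a) / σ n x) / (ν' n (x, a) / σ' n x))
    ∑ n ∈ Icc 1 N, ∑ x, ∑ a,
        (Real.log (μ n (x, a) / ρ n x) - Real.log (μ' n (x, a) / ρ' n x)) *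
          (μ n (x, a) - μ' n (x, a)) =
      Γ μ ρ μ' ρ' + Γ μ' ρ' μ ρ := by
  intro ρ ρ' Γ
  have key : ∀ n x a,
      (Real.log (μ n (x, a) / ρ n x) - Real.log (μ' n (x, a) / ρ' n x)) *
          (μ n (x, a) - μ' n (x, a)) =
      μ n (x, a) * Real.log ((μ n (x, a) / ρ n x) / (μ' n (x, a) / ρ' n x)) +
      μ' n (x, a) * Real.log ((μ' n (x, a) / ρ' n x) / (μ n (x, a) / ρ n x)) := by
    intro n x a
    have hA : Nonempty A := ⟨a⟩
    have hρ : 0 < ρ n x := Finset.sum_pos (fun b _ => hμpos n (x, b)) Finset.univ_nonempty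
    have hρ' : 0 < ρ' n x := Finset.sum_pos (fun b _ => hμ'pos n (x, b)) Finset.univ_nonempty
    have h1 : 0 < μ n (x, a) / ρ n x := div_pos (hμpos n _) hρ
    have h2 : 0 < μ' n (x, a) / ρ' n x := div_pos (hμ'pos n _) hρ'
    rw [Real.log_div (ne_of_gt h1) (ne_of_gt h2), Real.log_div (ne_of_gt h2) (ne_of_gt h1)]
    ring
  simp only [Γ]
  rw [← Finset.sum_add_distrib]
  refine Finset.sum_congr rfl fun n _ => ?_
  rw [← Finset.sum_add_distrib]
  refine Finset.sum_congr rfl fun x _ => ?_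
  rw [← Finset.sum_add_distrib]
  exact Finset.sum_congr rfl fun a _ => key n x a
end
end

section
/- Let ν^t := μ^{π*,p̂^t} be occupancy sequences (for a fixed policy π*) induced by kernel estimates p̂^t satisfying ‖ν^t − ν^{t+1}‖_{∞,1} ≤ 2N/t, and suppose each mixed policy π̃^t satisfies π̃^t_n(a|x) ≥ α_t/|A|, so that ‖∇ψ(μ̃^t)‖_{1,∞} ≤ N log(|A|/α_t) where ψ is the conditional-negentropy potential. Then Σ_{t=1}^T [ Γ(ν^{t+1}, μ̃^t) − Γ(ν^t, μ̃^t) ] ≤ −ψ(ν^1) + 2N² Σ_{t=1}^T log(|A|/α_t)/t, where Γ is the Bregman divergence induced by ψ. -/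
/-!
Writing `Γ(·, μ̃^t) = ψ − ψ(μ̃^t) − ⟨∇ψ(μ̃^t), · − μ̃^t⟩` with `∇ψ(μ̃^t) = log π̃^t`, the `t`-th summand
is `ψ(ν^{t+1}) − ψ(ν^t) + ⟨log π̃^t, ν^t − ν^{t+1}⟩`. The first parts telescope to
`ψ(ν^{T+1}) − ψ(ν^1) ≤ −ψ(ν^1)`, since a conditional negentropy is nonpositive. By Hölder's inequality
for the dual norms `‖·‖_{1,∞}` and `‖·‖_{∞,1}`, the pairing is at most
`N log(|A|/α_t) · 2N/t`, because `α_t/|A| ≤ π̃^t ≤ 1` forces `|log π̃^t| ≤ log(|A|/α_t)`.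
-/

open Finset

noncomputable section

variable {X A : Type*} [Fintype X] [Fintype A] [Nonempty A]

namespace IsDist

variable {Y : Type*} [Fintype Y] {η : Y → ℝ}

lemma le_one (h : IsDist η) (y : Y) : η y ≤ 1 :=
  h.2 ▸ single_le_sum (fun y _ => h.1 y) (mem_univ y)

lemma nonempty (h : IsDist η) : Nonempty Y := by
  by_contra hY
  have := h.2
  simp_all

end IsDist

lemma Real.abs_log_le_log_inv {m p : ℝ} (hm : 0 < m) (hmp : m ≤ p) (hp : p ≤ 1) :
    |Real.log p| ≤ Real.log m⁻¹ := by
  rw [Real.log_inv, abs_of_nonpos (Real.log_nonpos (hm.trans_le hmp).le hp), neg_le_neg_iff]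
  exact Real.log_le_log hm hmp

lemma sum_mul_log_div_sum_nonpos {ι : Type*} [Fintype ι] {μ : ι → ℝ} (hμ : ∀ i, 0 ≤ μ i) :
    ∑ i, μ i * Real.log (μ i / ∑ j, μ j) ≤ 0 := by
  refine sum_nonpos fun i _ => mul_nonpos_of_nonneg_of_nonpos (hμ i) (Real.log_nonpos ?_ ?_)
  · exact div_nonneg (hμ i) (sum_nonneg fun j _ => hμ j)
  · exact div_le_one_of_le₀ (single_le_sum (fun j _ => hμ j) (mem_univ i))
      (sum_nonneg fun j _ => hμ j)

lemma abs_sum_mul_le_mul_sum_abs {ι : Type*} {s : Finset ι} {c d : ι → ℝ} {L : ℝ}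
    (hc : ∀ i ∈ s, |c i| ≤ L) : |∑ i ∈ s, c i * d i| ≤ L * ∑ i ∈ s, |d i| :=
  calc |∑ i ∈ s, c i * d i| ≤ ∑ i ∈ s, |c i| * |d i| := by
        simpa only [abs_mul] using abs_sum_le_sum_abs (fun i => c i * d i) s
    _ ≤ ∑ i ∈ s, L * |d i| :=
        sum_le_sum fun i hi => mul_le_mul_of_nonneg_right (hc i hi) (abs_nonneg _)
    _ = L * ∑ i ∈ s, |d i| := (mul_sum _ _ _).symm

lemma abs_sum_sum_mul_le_card_mul {κ ι : Type*} [Fintype ι] {s : Finset κ} {c d : κ → ι → ℝ}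
    {L B : ℝ} (hL : 0 ≤ L) (hc : ∀ k ∈ s, ∀ i, |c k i| ≤ L) (hd : ∀ k ∈ s, ∑ i, |d k i| ≤ B) :
    |∑ k ∈ s, ∑ i, c k i * d k i| ≤ #s * (L * B) := by
  refine (abs_sum_le_sum_abs _ _).trans ?_
  rw [← nsmul_eq_mul]
  refine sum_le_card_nsmul _ _ _ fun k hk => ?_
  exact (abs_sum_mul_le_mul_sum_abs fun i _ => hc k hk i).trans
    (mul_le_mul_of_nonneg_left (hd k hk) hL)

/-- The left side is `Γ(ν', μ) − Γ(ν, μ)` for the Bregman divergence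
`Γ(·, μ) = ψ − ψ(μ) − ⟨g, · − μ⟩`, where `g = ∇ψ(μ)`. -/
lemma bregman_sub_bregman_le {κ Y Z : Type*} [Fintype Y] [Fintype Z] (s : Finset κ)
    (ψ : (κ → Y × Z → ℝ) → ℝ) {g : κ → Y → Z → ℝ} {μ ν ν' : κ → Y × Z → ℝ} {L B : ℝ}
    (hL : 0 ≤ L) (hg : ∀ k ∈ s, ∀ x a, |g k x a| ≤ L)
    (hd : ∀ k ∈ s, ∑ y, |ν k y - ν' k y| ≤ B) :
    (ψ ν' - ψ μ - ∑ k ∈ s, ∑ x, ∑ a, g k x a * (ν' k (x, a) - μ k (x, a))) -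
        (ψ ν - ψ μ - ∑ k ∈ s, ∑ x, ∑ a, g k x a * (ν k (x, a) - μ k (x, a))) ≤
      ψ ν' - ψ ν + #s * (L * B) := by
  have hlin : ∑ k ∈ s, ∑ x, ∑ a, g k x a * (ν k (x, a) - ν' k (x, a)) =
      ∑ k ∈ s, ∑ x, ∑ a, g k x a * (ν k (x, a) - μ k (x, a)) -
        ∑ k ∈ s, ∑ x, ∑ a, g k x a * (ν' k (x, a) - μ k (x, a)) := by
    simp only [← sum_sub_distrib, ← mul_sub, sub_sub_sub_cancel_right]
  have hpair : |∑ k ∈ s, ∑ y : Y × Z, g k y.1 y.2 * (ν k y - ν' k y)| ≤ #s * (L * B) :=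
    abs_sum_sum_mul_le_card_mul hL (fun k hk y => hg k hk y.1 y.2) hd
  simp only [Fintype.sum_prod_type] at hpair
  linarith [le_abs_self (∑ k ∈ s, ∑ x, ∑ a, g k x a * (ν k (x, a) - ν' k (x, a)))]

theorem sum_bregman_shift_bound_general (N T : ℕ) (hT : 1 ≤ T)
    (α : ℕ → ℝ) (hα : ∀ t, 0 < α t)
    (ν : ℕ → ℕ → X × A → ℝ) (hν : ∀ t n, IsDist (ν t n))
    (hνclose : ∀ t, 1 ≤ t → t ≤ T → ∀ n, 1 ≤ n → n ≤ N →
      ∑ y : X × A, |ν t n y - ν (t + 1) n y| ≤ 2 * N / t)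
    (μt : ℕ → ℕ → X × A → ℝ)
    (πt : ℕ → ℕ → X → A → ℝ) (hπt : ∀ t n x, IsDist (πt t n x))
    (hπtlb : ∀ t n x a, α t / (Fintype.card A : ℝ) ≤ πt t n x a) :
    -- the conditional-negentropy potential ψ
    let ψ : (ℕ → X × A → ℝ) → ℝ := fun μ =>
      ∑ n ∈ Icc 1 N, ∑ x, ∑ a,
        μ n (x, a) * Real.log (μ n (x, a) / ∑ a', μ n (x, a'))
    -- the Bregman divergence Γ(μ, μ̃^t) induced by ψ (with ∇ψ(μ̃^t) = log π̃^t)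
    let Γ : (ℕ → X × A → ℝ) → ℕ → ℝ := fun μ t =>
      ψ μ - ψ (μt t) -
        ∑ n ∈ Icc 1 N, ∑ x, ∑ a,
          Real.log (πt t n x a) * (μ n (x, a) - μt t n (x, a))
    ∑ t ∈ Icc 1 T, (Γ (ν (t + 1)) t - Γ (ν t) t) ≤
      -ψ (ν 1) +
        2 * (N : ℝ) ^ 2 *
          ∑ t ∈ Icc 1 T, Real.log ((Fintype.card A : ℝ) / α t) / t := by
  intro ψ Γ
  set L : ℕ → ℝ := fun t => Real.log ((Fintype.card A : ℝ) / α t)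
  have hlog (t n x a) : |Real.log (πt t n x a)| ≤ L t := by
    simpa only [inv_div] using Real.abs_log_le_log_inv
      (div_pos (hα t) (Nat.cast_pos.2 Fintype.card_pos)) (hπtlb t n x a) ((hπt t n x).le_one a)
  obtain ⟨x₀, -⟩ := (hν 0 0).nonempty
  have hL (t) : 0 ≤ L t := (abs_nonneg _).trans (hlog t 0 x₀ (Classical.arbitrary A))
  have step : ∀ t ∈ Icc 1 T, Γ (ν (t + 1)) t - Γ (ν t) t ≤
      ψ (ν (t + 1)) - ψ (ν t) + 2 * (N : ℝ) ^ 2 * (L t / t) := by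
    intro t ht
    obtain ⟨ht₁, ht₂⟩ := mem_Icc.1 ht
    have := bregman_sub_bregman_le (Icc 1 N) ψ (μ := μt t) (hL t) (fun n _ x a => hlog t n x a)
      fun n hn => hνclose t ht₁ ht₂ n (mem_Icc.1 hn).1 (mem_Icc.1 hn).2
    rw [Nat.card_Icc, Nat.add_sub_cancel] at this
    exact this.trans_eq (by ring)
  have hψ : ψ (ν (T + 1)) ≤ 0 :=
    sum_nonpos fun n _ => sum_nonpos fun x _ => sum_mul_log_div_sum_nonpos fun a => (hν _ n).1 _
  calc ∑ t ∈ Icc 1 T, (Γ (ν (t + 1)) t - Γ (ν t) t)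
      ≤ ∑ t ∈ Icc 1 T, (ψ (ν (t + 1)) - ψ (ν t) + 2 * (N : ℝ) ^ 2 * (L t / t)) := sum_le_sum step
    _ = ψ (ν (T + 1)) - ψ (ν 1) + 2 * (N : ℝ) ^ 2 * ∑ t ∈ Icc 1 T, L t / t := by
        rw [sum_add_distrib, sum_Icc_sub hT (fun t => ψ (ν t)), mul_sum]
    _ ≤ -ψ (ν 1) + 2 * (N : ℝ) ^ 2 * ∑ t ∈ Icc 1 T, L t / t := by linarith

/-- Varying-constraint-set bound: if consecutive occupancies `ν^t = μ^{π*,p̂^t}` satisfy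
`‖ν^t − ν^{t+1}‖_{∞,1} ≤ 2N/t` and the mixed policies satisfy `π̃^t ≥ α_t/|A|`
(so that `‖∇ψ(μ̃^t)‖ ≤ N log(|A|/α_t)`), then
`Σ_t [Γ(ν^{t+1}, μ̃^t) − Γ(ν^t, μ̃^t)] ≤ −ψ(ν^1) + 2N² Σ_t log(|A|/α_t)/t`. -/
theorem sum_bregman_shift_bound (N T : ℕ) (hN : 1 ≤ N) (hT : 1 ≤ T)
    (α : ℕ → ℝ) (hα : ∀ t, 0 < α t)
    (ν : ℕ → ℕ → X × A → ℝ) (hν : ∀ t n, IsDist (ν t n))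
    (hνclose : ∀ t, 1 ≤ t → t ≤ T → ∀ n, 1 ≤ n → n ≤ N →
      ∑ y : X × A, |ν t n y - ν (t + 1) n y| ≤ 2 * N / t)
    (μt : ℕ → ℕ → X × A → ℝ) (hμt : ∀ t n, IsDist (μt t n))
    (πt : ℕ → ℕ → X → A → ℝ) (hπt : ∀ t n x, IsDist (πt t n x))
    (hπtlb : ∀ t n x a, α t / (Fintype.card A : ℝ) ≤ πt t n x a)
    (hgen : ∀ t n x a, μt t n (x, a) = (∑ a', μt t n (x, a')) * πt t n x a) :
    -- the conditional-negentropy potential ψ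
    let ψ : (ℕ → X × A → ℝ) → ℝ := fun μ =>
      ∑ n ∈ Icc 1 N, ∑ x, ∑ a,
        μ n (x, a) * Real.log (μ n (x, a) / ∑ a', μ n (x, a'))
    -- the Bregman divergence Γ(μ, μ̃^t) induced by ψ (with ∇ψ(μ̃^t) = log π̃^t)
    let Γ : (ℕ → X × A → ℝ) → ℕ → ℝ := fun μ t =>
      ψ μ - ψ (μt t) -
        ∑ n ∈ Icc 1 N, ∑ x, ∑ a,
          Real.log (πt t n x a) * (μ n (x, a) - μt t n (x, a))
    ∑ t ∈ Icc 1 T, (Γ (ν (t + 1)) t - Γ (ν t) t) ≤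
      -ψ (ν 1) +
        2 * (N : ℝ) ^ 2 *
          ∑ t ∈ Icc 1 T, Real.log ((Fintype.card A : ℝ) / α t) / t :=
  sum_bregman_shift_bound_general N T hT α hα ν hν hνclose μt πt hπt hπtlb
end
end
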